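/- Let Λ and Π be finite dimensional selfinjective algebras over a field k, with algebra homomorphisms i: Λ → Π and π: Π → Λ such that π ∘ i = id_Λ, and suppose Π is projective as a left Λ-module (via i). Then the dimension of the stable module category of Λ as a triangulated category is at most the dimension of the stable module category of Π: dim(stmod Λ) ≤ dim(stmod Π). -/

import Mathlib

/-!
Restriction of scalars along `i : Λ → Θ` is exact and, as `Θ` is finitely generated and
projective over `Λ`, it preserves finitely generated modules and projective modules. It therefore
carries syzygies, stable isomorphisms, extensions and direct summands to the same, hence
`thickⁿ(G)` into `thickⁿ(res G)`. Since `pr ∘ i = id`, every `Λ`-module is the restriction of the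
`Θ`-module on which `Θ` acts through `pr`, so `res G` generates `stmod Λ` in as many steps as `G`
generates `stmod Θ`.
-/

noncomputable section


/-- A ring is selfinjective if it is injective as a module over itself. -/
def IsSelfInjectiveRing (R : Type) [Ring R] : Prop := Module.Injective R R

/-- `0 → C → E → D → 0` is a short exact sequence. -/
def IsExtOf (R : Type) [Ring R] (C E D : ModuleCat.{0} R) : Prop :=
  ∃ (f : C →ₗ[R] E) (g : E →ₗ[R] D),
    Function.Injective f ∧ Function.Surjective g ∧ LinearMap.range f = LinearMap.ker g

/-- `M` and `N` are isomorphic in the stable module category: they become isomorphic after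
adding projective direct summands. -/
def StIso (R : Type) [Ring R] (M N : ModuleCat.{0} R) : Prop :=
  ∃ P Q : ModuleCat.{0} R,
    Module.Finite R P ∧ Module.Projective R P ∧ Module.Finite R Q ∧ Module.Projective R Q ∧
    Nonempty ((M × P) ≃ₗ[R] (N × Q))

/-- The closure of `{G}` under (de)suspension in the stable module category: `N ∈ shifts G`
if `N` is an iterated syzygy or cosyzygy of `G`. -/
inductive InShifts (R : Type) [Ring R] (G : ModuleCat.{0} R) : ModuleCat.{0} R → Prop
  | base : InShifts R G G
  | up (M N E : ModuleCat.{0} R) : InShifts R G M → Module.Finite R N → Module.Finite R E →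
      Module.Projective R E → IsExtOf R M E N → InShifts R G N
  | down (M N E : ModuleCat.{0} R) : InShifts R G M → Module.Finite R N → Module.Finite R E →
      Module.Projective R E → IsExtOf R N E M → InShifts R G N

/-- `M` lies in `thick¹(C)`: up to projective summands, `M` is a direct summand of a finite
direct sum of shifts of objects of `C`. -/
def InThick1 (R : Type) [Ring R] (C : ModuleCat.{0} R → Prop) (M : ModuleCat.{0} R) : Prop :=
  ∃ (t : ℕ) (F : Fin t → ModuleCat.{0} R),
    (∀ i, Module.Finite R (F i) ∧ ∃ G, C G ∧ InShifts R G (F i)) ∧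
    ∃ P Q : ModuleCat.{0} R,
      Module.Finite R P ∧ Module.Projective R P ∧ Module.Finite R Q ∧ Module.Projective R Q ∧
      ∃ (ι : (M × P) →ₗ[R] ((∀ i, F i) × Q)) (π : ((∀ i, F i) × Q) →ₗ[R] (M × P)),
        ∀ z, π (ι z) = z

/-- `M ∈ C ∗ D`: there is a triangle `C → M → D`, i.e. up to stable isomorphism `M` is an
extension of an object of `D` by an object of `C`. -/
def InStar (R : Type) [Ring R] (C D : ModuleCat.{0} R → Prop) (M : ModuleCat.{0} R) : Prop :=
  ∃ A E B : ModuleCat.{0} R,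
    C A ∧ D B ∧ Module.Finite R A ∧ Module.Finite R E ∧ Module.Finite R B ∧
    IsExtOf R A E B ∧ StIso R M E

/-- `Thick R C n` is `thick^{n+1}(C)` in the stable module category. -/
def Thick (R : Type) [Ring R] (C : ModuleCat.{0} R → Prop) :
    ℕ → ModuleCat.{0} R → Prop
  | 0 => InThick1 R C
  | (n + 1) => InThick1 R (InStar R (Thick R C n) (InThick1 R C))

/-- The dimension of the stable module category of `R` (as a triangulated category, via
Rouquier's notion of dimension) is at most `d`. -/
def StModDimLE (R : Type) [Ring R] (d : ℕ) : Prop :=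
  ∃ G : ModuleCat.{0} R, Module.Finite R G ∧
    ∀ M : ModuleCat.{0} R, Module.Finite R M → Thick R (fun X => X = G) d M

namespace ModuleCat

variable {Λ Θ : Type} [Ring Λ] [Ring Θ] (f : Λ →+* Θ)

theorem isScalarTower_restrictScalars_obj (N : ModuleCat.{0} Θ) :
    letI := Module.compHom Θ f
    IsScalarTower Λ Θ ((restrictScalars f).obj N) :=
  letI := Module.compHom Θ f
  ⟨fun r s x => mul_smul (f r) s x⟩

theorem finite_restrictScalars_obj [hΘ : Module.Finite Λ ((restrictScalars f).obj (of Θ Θ))]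
    (N : ModuleCat.{0} Θ) [Module.Finite Θ N] : Module.Finite Λ ((restrictScalars f).obj N) :=
  letI := Module.compHom Θ f
  have := isScalarTower_restrictScalars_obj f N
  have : Module.Finite Λ Θ := hΘ
  have : Module.Finite Θ ((restrictScalars f).obj N) := ‹Module.Finite Θ N›
  Module.Finite.trans Θ _

theorem finite_of_finite_restrictScalars_obj (N : ModuleCat.{0} Θ)
    [Module.Finite Λ ((restrictScalars f).obj N)] : Module.Finite Θ N :=
  letI := Module.compHom Θ f
  have := isScalarTower_restrictScalars_obj f N
  Module.Finite.of_restrictScalars_finite Λ Θ ((restrictScalars f).obj N)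

/-- `N` is a retract of `Π₀ _ : N, Θ`, a direct sum of copies of the `Λ`-projective `Θ`. -/
theorem projective_restrictScalars_obj
    [hΘ : Module.Projective Λ ((restrictScalars f).obj (of Θ Θ))]
    (N : ModuleCat.{0} Θ) [hN : Module.Projective Θ N] :
    Module.Projective Λ ((restrictScalars f).obj N) := by
  classical
  let := Module.compHom Θ f
  have : Module.Projective Λ Θ := hΘ
  obtain ⟨s, hs⟩ := Module.projective_def'.mp hN
  let split : N →ₗ[Θ] Π₀ _ : N, Θ := (finsuppLequivDFinsupp Θ).toLinearMap ∘ₗ s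
  let retract : (Π₀ _ : N, Θ) →ₗ[Θ] N :=
    Finsupp.linearCombination Θ id ∘ₗ (finsuppLequivDFinsupp Θ).symm.toLinearMap
  refine Module.Projective.of_split (M := Π₀ _ : N, Θ)
    { split with map_smul' := fun r x => split.map_smul (f r) x }
    { retract with map_smul' := fun r x => retract.map_smul (f r) x } ?_
  ext x
  change Finsupp.linearCombination Θ id ((finsuppLequivDFinsupp Θ).symm
    (finsuppLequivDFinsupp Θ (s x))) = x
  rw [LinearEquiv.symm_apply_apply]
  exact LinearMap.congr_fun hs x

end ModuleCat

open ModuleCat (restrictScalars finite_restrictScalars_obj projective_restrictScalars_obj)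

section RestrictScalars

variable {Λ Θ : Type} [Ring Λ] [Ring Θ] (f : Λ →+* Θ)

theorem IsExtOf.restrictScalars {C E D : ModuleCat.{0} Θ} (h : IsExtOf Θ C E D) :
    IsExtOf Λ ((restrictScalars f).obj C) ((restrictScalars f).obj E)
      ((restrictScalars f).obj D) := by
  obtain ⟨g, g', hg, hg', hexact⟩ := h
  exact ⟨((ModuleCat.restrictScalars f).map (ModuleCat.ofHom g)).hom,
    ((ModuleCat.restrictScalars f).map (ModuleCat.ofHom g')).hom,
    hg, hg', SetLike.ext fun x => SetLike.ext_iff.mp hexact x⟩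

variable [Module.Finite Λ ((restrictScalars f).obj (ModuleCat.of Θ Θ))]
  [Module.Projective Λ ((restrictScalars f).obj (ModuleCat.of Θ Θ))]

theorem InShifts.restrictScalars {G N : ModuleCat.{0} Θ} (h : InShifts Θ G N) :
    InShifts Λ ((restrictScalars f).obj G) ((restrictScalars f).obj N) := by
  induction h with
  | base => exact .base
  | up _ N E _ hN hE hPE hext ih =>
      exact .up _ _ _ ih (finite_restrictScalars_obj f N) (finite_restrictScalars_obj f E)
        (projective_restrictScalars_obj f E) (hext.restrictScalars f)
  | down _ N E _ hN hE hPE hext ih =>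
      exact .down _ _ _ ih (finite_restrictScalars_obj f N) (finite_restrictScalars_obj f E)
        (projective_restrictScalars_obj f E) (hext.restrictScalars f)

theorem StIso.restrictScalars {M N : ModuleCat.{0} Θ} (h : StIso Θ M N) :
    StIso Λ ((restrictScalars f).obj M) ((restrictScalars f).obj N) := by
  obtain ⟨P, Q, _, _, _, _, ⟨e⟩⟩ := h
  exact ⟨(ModuleCat.restrictScalars f).obj P, (ModuleCat.restrictScalars f).obj Q,
    finite_restrictScalars_obj f P, projective_restrictScalars_obj f P,
    finite_restrictScalars_obj f Q, projective_restrictScalars_obj f Q,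
    ⟨{ e with map_smul' := fun r x => e.map_smul (f r) x }⟩⟩

theorem InThick1.restrictScalars {C : ModuleCat.{0} Θ → Prop} {C' : ModuleCat.{0} Λ → Prop}
    (hC : ∀ X, C X → C' ((ModuleCat.restrictScalars f).obj X)) {M : ModuleCat.{0} Θ}
    (h : InThick1 Θ C M) : InThick1 Λ C' ((restrictScalars f).obj M) := by
  obtain ⟨t, F, hF, P, Q, _, _, _, _, ι, π, hπι⟩ := h
  refine ⟨t, fun j => (ModuleCat.restrictScalars f).obj (F j), fun j => ?_,
    (ModuleCat.restrictScalars f).obj P, (ModuleCat.restrictScalars f).obj Q,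
    finite_restrictScalars_obj f P, projective_restrictScalars_obj f P,
    finite_restrictScalars_obj f Q, projective_restrictScalars_obj f Q,
    { ι with map_smul' := fun r x => ι.map_smul (f r) x },
    { π with map_smul' := fun r x => π.map_smul (f r) x }, hπι⟩
  obtain ⟨_, G, hG, hGF⟩ := hF j
  exact ⟨finite_restrictScalars_obj f (F j), _, hC G hG, hGF.restrictScalars f⟩

theorem InStar.restrictScalars {C D : ModuleCat.{0} Θ → Prop} {C' D' : ModuleCat.{0} Λ → Prop}
    (hC : ∀ X, C X → C' ((ModuleCat.restrictScalars f).obj X))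
    (hD : ∀ X, D X → D' ((ModuleCat.restrictScalars f).obj X)) {M : ModuleCat.{0} Θ}
    (h : InStar Θ C D M) : InStar Λ C' D' ((restrictScalars f).obj M) := by
  obtain ⟨A, E, B, hA, hB, _, _, _, hext, hiso⟩ := h
  exact ⟨_, _, _, hC A hA, hD B hB, finite_restrictScalars_obj f A,
    finite_restrictScalars_obj f E, finite_restrictScalars_obj f B,
    hext.restrictScalars f, hiso.restrictScalars f⟩

theorem Thick.restrictScalars {C : ModuleCat.{0} Θ → Prop} {C' : ModuleCat.{0} Λ → Prop}
    (hC : ∀ X, C X → C' ((ModuleCat.restrictScalars f).obj X)) :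
    ∀ {n : ℕ} {M : ModuleCat.{0} Θ}, Thick Θ C n M → Thick Λ C' n ((restrictScalars f).obj M)
  | 0, _, h => InThick1.restrictScalars f hC h
  | _ + 1, _, h => InThick1.restrictScalars f
      (fun _ hX => InStar.restrictScalars f (fun _ => Thick.restrictScalars hC)
        (fun _ => InThick1.restrictScalars f hC) hX) h

end RestrictScalars

theorem InThick1.of_linearEquiv {R : Type} [Ring R] {C : ModuleCat.{0} R → Prop}
    {M N : ModuleCat.{0} R} (h : InThick1 R C M) (e : M ≃ₗ[R] N) : InThick1 R C N := by
  obtain ⟨t, F, hF, P, Q, hP, hP', hQ, hQ', ι, π, hπι⟩ := h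
  let eP := e.prodCongr (LinearEquiv.refl R P)
  refine ⟨t, F, hF, P, Q, hP, hP', hQ, hQ', ι ∘ₗ eP.symm.toLinearMap, eP.toLinearMap ∘ₗ π,
    fun z => ?_⟩
  simp [hπι]

theorem Thick.of_linearEquiv {R : Type} [Ring R] {C : ModuleCat.{0} R → Prop} {n : ℕ}
    {M N : ModuleCat.{0} R} (h : Thick R C n M) (e : M ≃ₗ[R] N) : Thick R C n N := by
  cases n <;> exact InThick1.of_linearEquiv h e

theorem StModDimLE.of_retraction {Λ Θ : Type} [Ring Λ] [Ring Θ] (f : Λ →+* Θ) (g : Θ →+* Λ)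
    (hgf : g.comp f = RingHom.id Λ)
    [Module.Finite Λ ((restrictScalars f).obj (ModuleCat.of Θ Θ))]
    [Module.Projective Λ ((restrictScalars f).obj (ModuleCat.of Θ Θ))]
    {d : ℕ} (h : StModDimLE Θ d) : StModDimLE Λ d := by
  obtain ⟨G, _, hG⟩ := h
  refine ⟨(restrictScalars f).obj G, finite_restrictScalars_obj f G, fun M _ => ?_⟩
  let e : (restrictScalars f).obj ((restrictScalars g).obj M) ≅ M :=
    (ModuleCat.restrictScalarsComp'App f g _ hgf.symm M).symm ≪≫
      ModuleCat.restrictScalarsId'App _ rfl M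
  have := Module.Finite.equiv e.symm.toLinearEquiv
  have := ModuleCat.finite_of_finite_restrictScalars_obj f ((restrictScalars g).obj M)
  exact ((hG _ this).restrictScalars f (fun X hX => hX ▸ rfl)).of_linearEquiv e.toLinearEquiv

theorem stmt_16_general (k : Type) [Field k] (Λ : Type) [Ring Λ] [Algebra k Λ]
    (Θ : Type) [Ring Θ] [Algebra k Θ] [FiniteDimensional k Θ]
    (i : Λ →ₐ[k] Θ) (pr : Θ →ₐ[k] Λ) (hpri : pr.comp i = AlgHom.id k Λ) :
    letI : Module Λ Θ := Module.compHom Θ i.toRingHom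
    Module.Projective Λ Θ →
      ∀ d : ℕ, StModDimLE Θ d → StModDimLE Λ d := by
  let : Module Λ Θ := Module.compHom Θ i.toRingHom
  intro hproj d
  have : IsScalarTower k Λ Θ :=
    ⟨fun c r θ => show i (c • r) * θ = c • (i r * θ) by rw [map_smul, smul_mul_assoc]⟩
  have : Module.Finite Λ ((restrictScalars i.toRingHom).obj (ModuleCat.of Θ Θ)) :=
    Module.Finite.of_restrictScalars_finite k Λ Θ
  have : Module.Projective Λ ((restrictScalars i.toRingHom).obj (ModuleCat.of Θ Θ)) := hproj
  exact StModDimLE.of_retraction i.toRingHom pr.toRingHom (congrArg AlgHom.toRingHom hpri)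

/-- Lemma (Bergh–Oppermann): if `Λ` and `Π` are finite dimensional selfinjective algebras
with algebra maps `i : Λ → Θ` and `pr : Θ → Λ` satisfying `pr ∘ i = id`, and `Θ` is projective
as a left `Λ`-module via `i`, then `dim (stmod Λ) ≤ dim (stmod Θ)`. -/
theorem stmt_16 (k : Type) [Field k] (Λ : Type) [Ring Λ] [Algebra k Λ]
    [FiniteDimensional k Λ] (Θ : Type) [Ring Θ] [Algebra k Θ] [FiniteDimensional k Θ]
    (hΛ : IsSelfInjectiveRing Λ) (hTh : IsSelfInjectiveRing Θ)
    (i : Λ →ₐ[k] Θ) (pr : Θ →ₐ[k] Λ) (hpri : pr.comp i = AlgHom.id k Λ) :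
    letI : Module Λ Θ := Module.compHom Θ i.toRingHom
    Module.Projective Λ Θ →
      ∀ d : ℕ, StModDimLE Θ d → StModDimLE Λ d :=
  stmt_16_general k Λ Θ i pr hpri

end
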